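/- arXiv:2601.14451 — 6 statements merged into one kernel-verified Lean document; each statement's English description precedes it below -/
import Mathlib

section
/- Let $(d_k) \subset [0,\infty)$, $(\nu_k) \subset [0,\infty)$, and $(\sigma_k) \subset [0,\infty)$ with $\sigma_k \to 0$. Assume $d_{k+1} \le d_k + \sigma_k - \nu_k$ for all $k \ge 1$, and that whenever $\nu_{n_k} \to 0$ along some subsequence $(n_k)$, the corresponding subsequence $d_{n_k} \to 0$. Then $d_k \to 0$. -/
/-!
Since `d ≥ 0` cannot decrease by a fixed amount forever and `σ → 0`, `ν` is frequently small.
Extracting subsequences, the hypothesis on subsequences upgrades to a uniform statement: for each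
`ε > 0` there is `δ > 0` with `ν k < δ → d k < ε` eventually. Hence `d` is frequently below `ε`,
and once `σ < min δ (ε / 2)` the recursion traps `d` below `ε`: if `d k ≥ ε / 2` then
`ν k ≥ δ > σ k`, so `d` decreases, and otherwise `d (k + 1) ≤ d k + σ k < ε`.
-/

open Filter Topology

theorem not_eventually_succ_le_sub {u : ℕ → ℝ} (hu : ∀ k, 0 ≤ u k) {c : ℝ} (hc : 0 < c) :
    ¬ ∀ᶠ k in atTop, u (k + 1) ≤ u k - c := by
  intro h
  obtain ⟨N, hN⟩ := eventually_atTop.1 h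
  have hdecay : ∀ n : ℕ, u (N + n) ≤ u N - n * c := by
    intro n
    induction n with
    | zero => simp
    | succ n ih =>
      rw [← add_assoc]
      push_cast
      linarith [hN (N + n) (Nat.le_add_right N n)]
  obtain ⟨n, hn⟩ := exists_nat_gt (u N / c)
  rw [div_lt_iff₀ hc] at hn
  linarith [hdecay n, hu (N + n)]

theorem eventually_atTop_of_frequently_of_succ {p : ℕ → Prop}
    (hstep : ∀ᶠ k in atTop, p k → p (k + 1)) (hp : ∃ᶠ k in atTop, p k) :
    ∀ᶠ k in atTop, p k := by
  obtain ⟨N, hN⟩ := eventually_atTop.1 hstep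
  obtain ⟨m, hmN, hm⟩ := frequently_atTop.1 hp N
  refine eventually_atTop.2 ⟨m, fun k hk => ?_⟩
  induction k, hk using Nat.le_induction with
  | base => exact hm
  | succ k hmk ih => exact hN k (hmN.trans hmk) ih

section

variable {d ν σ : ℕ → ℝ}

theorem frequently_lt_of_le_add_sub (hd : ∀ k, 0 ≤ d k) (hσ0 : Tendsto σ atTop (𝓝 0))
    (hrec : ∀ᶠ k in atTop, d (k + 1) ≤ d k + σ k - ν k) {δ : ℝ} (hδ : 0 < δ) :
    ∃ᶠ k in atTop, ν k < δ := by
  by_contra h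
  rw [not_frequently] at h
  refine not_eventually_succ_le_sub hd (half_pos hδ) ?_
  filter_upwards [h, hrec, hσ0.eventually (gt_mem_nhds (half_pos hδ))] with k hνk hk hσk
  linarith [not_lt.1 hνk]

theorem exists_pos_eventually_lt_imp_lt (hν : ∀ k, 0 ≤ ν k)
    (himp : ∀ φ : ℕ → ℕ, StrictMono φ →
      Tendsto (ν ∘ φ) atTop (𝓝 0) → Tendsto (d ∘ φ) atTop (𝓝 0))
    {ε : ℝ} (hε : 0 < ε) :
    ∃ δ > 0, ∀ᶠ k in atTop, ν k < δ → d k < ε := by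
  by_contra! h
  obtain ⟨φ, hφ, hφν⟩ :=
    extraction_forall_of_frequently fun n : ℕ => h (1 / (n + 1)) (by positivity)
  have hν0 : Tendsto (ν ∘ φ) atTop (𝓝 0) :=
    squeeze_zero (fun n => hν _) (fun n => (hφν n).1.le) tendsto_one_div_add_atTop_nhds_zero_nat
  obtain ⟨n, hn⟩ := ((himp φ hφ hν0).eventually (gt_mem_nhds hε)).exists
  exact (hφν n).2.not_gt hn

theorem eventually_lt_of_le_add_sub (hd : ∀ k, 0 ≤ d k) (hν : ∀ k, 0 ≤ ν k)
    (hσ0 : Tendsto σ atTop (𝓝 0)) (hrec : ∀ᶠ k in atTop, d (k + 1) ≤ d k + σ k - ν k)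
    (himp : ∀ φ : ℕ → ℕ, StrictMono φ →
      Tendsto (ν ∘ φ) atTop (𝓝 0) → Tendsto (d ∘ φ) atTop (𝓝 0))
    {ε : ℝ} (hε : 0 < ε) :
    ∀ᶠ k in atTop, d k < ε := by
  obtain ⟨δ, hδ, hsmall⟩ := exists_pos_eventually_lt_imp_lt hν himp (half_pos hε)
  have hstep : ∀ᶠ k in atTop, d k < ε → d (k + 1) < ε := by
    filter_upwards [hsmall, hrec, hσ0.eventually (gt_mem_nhds (lt_min hδ (half_pos hε)))]
      with k hk hrec hσk hdk
    have := min_le_left δ (ε / 2)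
    have := min_le_right δ (ε / 2)
    by_cases hνk : ν k < δ
    · linarith [hk hνk, hν k]
    · linarith [not_lt.1 hνk]
  refine eventually_atTop_of_frequently_of_succ hstep ?_
  exact ((frequently_lt_of_le_add_sub hd hσ0 hrec hδ).and_eventually hsmall).mono
    fun k hk => (hk.2 hk.1).trans (half_lt_self hε)

end

theorem stmt8_general (d ν σ : ℕ → ℝ)
    (hd : ∀ k, 0 ≤ d k) (hν : ∀ k, 0 ≤ ν k)
    (hσ0 : Tendsto σ atTop (nhds 0))
    (hrec : ∀ k ≥ 1, d (k + 1) ≤ d k + σ k - ν k)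
    (himp : ∀ φ : ℕ → ℕ, StrictMono φ →
      Tendsto (ν ∘ φ) atTop (nhds 0) → Tendsto (d ∘ φ) atTop (nhds 0)) :
    Tendsto d atTop (nhds 0) :=
  tendsto_order.2
    ⟨fun _ ha => Eventually.of_forall fun k => ha.trans_le (hd k),
     fun _ hε => eventually_lt_of_le_add_sub hd hν hσ0 (eventually_atTop.2 ⟨1, hrec⟩) himp hε⟩

theorem stmt8 (d ν σ : ℕ → ℝ)
    (hd : ∀ k, 0 ≤ d k) (hν : ∀ k, 0 ≤ ν k) (hσ : ∀ k, 0 ≤ σ k)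
    (hσ0 : Tendsto σ atTop (nhds 0))
    (hrec : ∀ k ≥ 1, d (k + 1) ≤ d k + σ k - ν k)
    (himp : ∀ φ : ℕ → ℕ, StrictMono φ →
      Tendsto (ν ∘ φ) atTop (nhds 0) → Tendsto (d ∘ φ) atTop (nhds 0)) :
    Tendsto d atTop (nhds 0) :=
  stmt8_general d ν σ hd hν hσ0 hrec himp
end

section
/- Let $U_1,\ldots,U_m \subset \mathbb{R}^n$ be closed convex sets with $S := \bigcap_i U_i \neq \varnothing$. Suppose $T : \mathbb{R}^n \to \mathbb{R}^n$ satisfies $\|Tx - s\|^2 \le \|x - s\|^2 - c_0\,\delta(x)^2$ for all $s \in S$, $x \in \mathbb{R}^n$, with $c_0 > 0$ and $\delta(x) = \max_i \mathrm{dist}(x,U_i)$. Let $(\alpha_k) \subset [0,1]$ satisfy $\alpha_k \to 0$ and $\sum_k \alpha_k = \infty$. For $x \in \mathbb{R}^n$, define the Halpern iteration $x_0 = x$, $x_{k+1} = \alpha_k x + (1-\alpha_k) T x_k$. Then $x_k \to P_S(x)$, the projection of $x$ onto $S$. -/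
open Metric Filter

set_option maxHeartbeats 2000000 in
theorem stmt11 {n m : ℕ} (hm : 0 < m) (U : Fin m → Set (EuclideanSpace ℝ (Fin n)))
    (hUcl : ∀ i, IsClosed (U i)) (hUcv : ∀ i, Convex ℝ (U i))
    (hS : (⋂ i, U i).Nonempty)
    (T : EuclideanSpace ℝ (Fin n) → EuclideanSpace ℝ (Fin n))
    (c0 : ℝ) (hc0 : 0 < c0)
    (hT : ∀ s ∈ ⋂ i, U i, ∀ z,
      ‖T z - s‖ ^ 2 ≤ ‖z - s‖ ^ 2 - c0 * (⨆ i, infDist z (U i)) ^ 2)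
    (α : ℕ → ℝ) (hα : ∀ k, α k ∈ Set.Icc (0:ℝ) 1)
    (hα0 : Tendsto α atTop (nhds 0))
    (hαdiv : Tendsto (fun N => ∑ k ∈ Finset.range N, α k) atTop atTop)
    (a : EuclideanSpace ℝ (Fin n))
    (x : ℕ → EuclideanSpace ℝ (Fin n)) (hx0 : x 0 = a)
    (hxrec : ∀ k, x (k + 1) = α k • a + (1 - α k) • T (x k))
    (p : EuclideanSpace ℝ (Fin n)) (hpS : p ∈ ⋂ i, U i)
    (hproj : ∀ y ∈ ⋂ i, U i, ‖a - p‖ ≤ ‖a - y‖) :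
    Tendsto x atTop (nhds p) := by
  haveI : Nonempty (Fin m) := ⟨⟨0, hm⟩⟩
  set δ : EuclideanSpace ℝ (Fin n) → ℝ := fun y => ⨆ i, infDist y (U i) with hδdef
  set e : ℕ → ℝ := fun k => ‖x k - p‖ ^ 2 with hedef
  set R : ℝ := ‖a - p‖ with hRdef
  set C : ℝ := 2 * R ^ 2 + 1 with hCdef
  have hα0' : ∀ k, 0 ≤ α k := fun k => (hα k).1
  have hα1 : ∀ k, α k ≤ 1 := fun k => (hα k).2
  have hδ0 : ∀ y : EuclideanSpace ℝ (Fin n), 0 ≤ δ y := fun y => Real.iSup_nonneg fun i => infDist_nonneg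
  have hδle : ∀ (y : EuclideanSpace ℝ (Fin n)) (i : Fin m), infDist y (U i) ≤ δ y := by
    intro y i
    show infDist y (U i) ≤ ⨆ j, infDist y (U j)
    exact le_ciSup (f := fun j => infDist y (U j)) (Set.Finite.bddAbove (Set.finite_range _)) i
  have hTp : ∀ z : EuclideanSpace ℝ (Fin n), ‖T z - p‖ ^ 2 ≤ ‖z - p‖ ^ 2 - c0 * δ z ^ 2 := fun z => hT p hpS z
  have he0 : ∀ k, 0 ≤ e k := fun k => sq_nonneg _
  -- variational inequality for the projection
  have VI : ∀ y ∈ ⋂ i, U i, (inner ℝ (a - p) (y - p) : ℝ) ≤ 0 := by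
    have hconv : Convex ℝ (⋂ i, U i) := convex_iInter fun i => hUcv i
    haveI : Nonempty ↥(⋂ i, U i) := ⟨⟨p, hpS⟩⟩
    have hmin : ‖a - p‖ = ⨅ w : ↥(⋂ i, U i), ‖a - (w : EuclideanSpace ℝ (Fin n))‖ := by
      refine le_antisymm (le_ciInf fun w => hproj w w.2) ?_
      exact ciInf_le ⟨0, fun z ⟨w, hw⟩ => hw ▸ norm_nonneg _⟩ (⟨p, hpS⟩ : ↥(⋂ i, U i))
    exact (norm_eq_iInf_iff_real_inner_le_zero hconv hpS).1 hmin
  -- algebraic identity for the recursion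
  have key : ∀ k, x (k + 1) - p = (1 - α k) • (T (x k) - p) + α k • (a - p) := by
    intro k; rw [hxrec k]; module
  -- quasi-nonexpansiveness
  have Tq : ∀ k, ‖T (x k) - p‖ ≤ ‖x k - p‖ := by
    intro k
    refine le_of_pow_le_pow_left₀ two_ne_zero (norm_nonneg _) ?_
    have := hTp (x k)
    nlinarith [hδ0 (x k), sq_nonneg (δ (x k)), mul_nonneg hc0.le (sq_nonneg (δ (x k)))]
  -- boundedness
  have hbound : ∀ k, ‖x k - p‖ ≤ R := by
    intro k
    induction k with
    | zero => rw [hx0]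
    | succ k ih =>
      rw [key k]
      calc ‖(1 - α k) • (T (x k) - p) + α k • (a - p)‖
          ≤ ‖(1 - α k) • (T (x k) - p)‖ + ‖α k • (a - p)‖ := norm_add_le _ _
        _ = (1 - α k) * ‖T (x k) - p‖ + α k * ‖a - p‖ := by
            rw [norm_smul, norm_smul, Real.norm_eq_abs, Real.norm_eq_abs,
              abs_of_nonneg (by linarith [hα1 k]), abs_of_nonneg (hα0' k)]
        _ ≤ (1 - α k) * R + α k * R := by
            have h1 : ‖T (x k) - p‖ ≤ R := (Tq k).trans ih
            have := hα0' k; have := hα1 k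
            nlinarith
        _ = R := by ring
  -- main one-step inequality
  have A1 : ∀ u v : EuclideanSpace ℝ (Fin n),
      ‖u + v‖ ^ 2 ≤ ‖u‖ ^ 2 + 2 * inner ℝ v (u + v) := by
    intro u v
    have h1 := norm_add_sq_real u v
    have h2 : (inner ℝ v (u + v) : ℝ) = inner ℝ v u + ‖v‖ ^ 2 := by
      rw [inner_add_right, real_inner_self_eq_norm_sq]
    have h3 : (inner ℝ u v : ℝ) = inner ℝ v u := (real_inner_comm u v).symm
    nlinarith [sq_nonneg ‖v‖]
  have I : ∀ k, e (k + 1) ≤ (1 - α k) * (e k - c0 * δ (x k) ^ 2)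
      + α k * (2 * inner ℝ (a - p) (x (k + 1) - p)) := by
    intro k
    have h4 : e (k + 1) ≤ ‖(1 - α k) • (T (x k) - p)‖ ^ 2
        + 2 * inner ℝ (α k • (a - p)) (x (k + 1) - p) := by
      have h := A1 ((1 - α k) • (T (x k) - p)) (α k • (a - p))
      rw [← key k] at h
      exact h
    have h5 : ‖(1 - α k) • (T (x k) - p)‖ ^ 2 = (1 - α k) ^ 2 * ‖T (x k) - p‖ ^ 2 := by
      rw [norm_smul, Real.norm_eq_abs, mul_pow, sq_abs]
    have h6 : (inner ℝ (α k • (a - p)) (x (k + 1) - p) : ℝ)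
        = α k * inner ℝ (a - p) (x (k + 1) - p) := real_inner_smul_left _ _ _
    have h7 : ‖T (x k) - p‖ ^ 2 ≤ e k - c0 * δ (x k) ^ 2 := hTp (x k)
    have h8 : (0 : ℝ) ≤ 1 - α k := by linarith [hα1 k]
    have hstep : (1 - α k) ^ 2 * ‖T (x k) - p‖ ^ 2
        ≤ (1 - α k) * (e k - c0 * δ (x k) ^ 2) := by
      have t1 : (1 - α k) ^ 2 * ‖T (x k) - p‖ ^ 2
          ≤ (1 - α k) ^ 2 * (e k - c0 * δ (x k) ^ 2) :=
        mul_le_mul_of_nonneg_left h7 (sq_nonneg _)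
      have t2 : (1 - α k) ^ 2 ≤ 1 - α k := by nlinarith [hα0' k]
      have t3 : (0 : ℝ) ≤ e k - c0 * δ (x k) ^ 2 := le_trans (sq_nonneg _) h7
      nlinarith
    rw [h5, h6] at h4
    linarith
  have hβ : ∀ k, 2 * (inner ℝ (a - p) (x (k + 1) - p) : ℝ) ≤ C := by
    intro k
    have h1 : (inner ℝ (a - p) (x (k + 1) - p) : ℝ) ≤ ‖a - p‖ * ‖x (k + 1) - p‖ :=
      real_inner_le_norm _ _
    have h2 := hbound (k + 1)
    have hR0 : (0:ℝ) ≤ R := norm_nonneg _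
    rw [hCdef]
    nlinarith
  have Ia : ∀ k, e (k + 1) ≤ (1 - α k) * e k
      + α k * (2 * inner ℝ (a - p) (x (k + 1) - p)) := by
    intro k
    have := I k
    nlinarith [mul_nonneg hc0.le (sq_nonneg (δ (x k))), hα1 k, hα0' k]
  have Ib : ∀ k, e (k + 1) ≤ e k - (1 - α k) * (c0 * δ (x k) ^ 2) + α k * C := by
    intro k
    have h1 := I k
    have h2 := hβ k
    nlinarith [hα0' k, hα1 k, he0 k]
  clear_value δ e R C
  -- compactness claim
  have hd : ∀ ε : ℝ, 0 < ε → ∃ d : ℝ, 0 < d ∧ d ^ 2 ≤ ε ∧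
      ∀ y : EuclideanSpace ℝ (Fin n), ‖y - p‖ ≤ R → ε ≤ inner ℝ (a - p) (y - p) → d ≤ δ y := by
    intro ε hε
    have claim0 : ∃ d : ℝ, 0 < d ∧
        ∀ y : EuclideanSpace ℝ (Fin n), ‖y - p‖ ≤ R → ε ≤ inner ℝ (a - p) (y - p) → d ≤ δ y := by
      by_contra hcon
      push_neg at hcon
      choose y hy1 hy2 hy3 using fun j : ℕ => hcon (1 / (j + 1)) (by positivity)
      have hmem : ∀ j, y j ∈ closedBall p R := fun j => by
        rw [mem_closedBall_iff_norm]; exact hy1 j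
      obtain ⟨q, hq, ψ, hψmono, hψtend⟩ :=
        (isCompact_closedBall p R).tendsto_subseq hmem
      have hqS : q ∈ ⋂ i, U i := by
        rw [Set.mem_iInter]
        intro i
        obtain ⟨s0, hs0⟩ := hS
        have hUne : (U i).Nonempty := ⟨s0, Set.mem_iInter.1 hs0 i⟩
        rw [(hUcl i).mem_iff_infDist_zero hUne]
        have t1 : Tendsto (fun l => infDist (y (ψ l)) (U i)) atTop
            (nhds (infDist q (U i))) :=
          ((continuous_infDist_pt (U i)).tendsto q).comp hψtend
        have t2 : Tendsto (fun l => infDist (y (ψ l)) (U i)) atTop (nhds 0) := by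
          refine squeeze_zero (fun l => infDist_nonneg) (fun l => ?_)
            tendsto_one_div_add_atTop_nhds_zero_nat
          refine le_trans (le_trans (hδle _ i) (hy3 (ψ l)).le) ?_
          have hl : (l : ℝ) + 1 ≤ (ψ l : ℝ) + 1 := by
            exact_mod_cast Nat.succ_le_succ hψmono.le_apply
          exact one_div_le_one_div_of_le (by positivity) hl
        exact tendsto_nhds_unique t1 t2
      have hcontr : ε ≤ inner ℝ (a - p) (q - p) := by
        have tc : Tendsto (fun l => (inner ℝ (a - p) (y (ψ l) - p) : ℝ)) atTop
            (nhds (inner ℝ (a - p) (q - p))) :=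
          (((continuous_const.inner (continuous_id.sub continuous_const)).tendsto q).comp
            hψtend)
        exact ge_of_tendsto tc (Eventually.of_forall fun l => hy2 (ψ l))
      linarith [VI q hqS]
    obtain ⟨d, hdpos, hdprop⟩ := claim0
    refine ⟨min d (Real.sqrt ε), lt_min hdpos (Real.sqrt_pos.2 hε), ?_, ?_⟩
    · calc (min d (Real.sqrt ε)) ^ 2 ≤ Real.sqrt ε ^ 2 :=
          pow_le_pow_left₀ (le_min hdpos.le (Real.sqrt_nonneg _)) (min_le_right _ _) 2
        _ = ε := Real.sq_sqrt hε.le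
    · intro y h1 h2
      exact (min_le_left _ _).trans (hdprop y h1 h2)
  -- main estimate
  have main : ∀ ε' : ℝ, 0 < ε' → ∃ N, ∀ k, N ≤ k → e k < ε' := by
    intro ε' hε'
    set ε : ℝ := ε' / (3 + c0) with hεdef
    have hε : 0 < ε := by rw [hεdef]; positivity
    obtain ⟨d, hdpos, hdsq, hdP⟩ := hd ε hε
    set ρ : ℝ := c0 * d ^ 2 / 2 with hρdef
    have hρ : 0 < ρ := by rw [hρdef]; positivity
    have hρε : ρ ≤ c0 * ε / 2 := by rw [hρdef]; nlinarith
    clear_value ε ρ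
    have hC : 0 < C := by rw [hCdef]; positivity
    obtain ⟨N₁, hN₁⟩ : ∃ N₁, ∀ k, N₁ ≤ k → α k * C ≤ ρ / 4 ∧ α k ≤ 1 / 2 := by
      obtain ⟨N₁, h⟩ := Metric.tendsto_atTop.1 hα0 (min (ρ / (4 * C)) (1 / 2))
        (lt_min (by positivity) (by norm_num))
      refine ⟨N₁, fun k hk => ?_⟩
      have h2 := h k hk
      rw [Real.dist_eq, sub_zero, abs_of_nonneg (hα0' k)] at h2
      constructor
      · have h3 : α k ≤ ρ / (4 * C) := (h2.trans_le (min_le_left _ _)).le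
        calc α k * C ≤ ρ / (4 * C) * C := by nlinarith
          _ = ρ / 4 := by field_simp
      · exact (h2.trans_le (min_le_right _ _)).le
    have drop : ∀ k, N₁ ≤ k → d ≤ δ (x k) → e (k + 1) ≤ e k - 3 * (ρ / 4) := by
      intro k hk hdk
      have h1 := Ib k
      have h2 := (hN₁ k hk).1
      have h3 := (hN₁ k hk).2
      have h4 : d ^ 2 ≤ δ (x k) ^ 2 := pow_le_pow_left₀ hdpos.le hdk 2
      have h5 : (1 : ℝ) / 2 ≤ 1 - α k := by linarith
      have h6a : c0 * d ^ 2 ≤ c0 * δ (x k) ^ 2 := mul_le_mul_of_nonneg_left h4 hc0.le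
      have h6b : 1 / 2 * (c0 * δ (x k) ^ 2) ≤ (1 - α k) * (c0 * δ (x k) ^ 2) :=
        mul_le_mul_of_nonneg_right h5 (by positivity)
      have h6 : ρ ≤ (1 - α k) * (c0 * δ (x k) ^ 2) := by
        rw [hρdef]; linarith
      linarith
    have rise : ∀ k, N₁ ≤ k → e (k + 1) ≤ e k + ρ / 4 := by
      intro k hk
      have h1 := Ib k
      have h2 := (hN₁ k hk).1
      nlinarith [mul_nonneg (mul_nonneg (by linarith [hα1 k] : (0:ℝ) ≤ 1 - α k) hc0.le)
        (sq_nonneg (δ (x k)))]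
    have good : ∀ k, (inner ℝ (a - p) (x (k + 1) - p) : ℝ) < ε →
        e (k + 1) ≤ (1 - α k) * e k + α k * (2 * ε) := by
      intro k hkg
      have h1 := Ia k
      nlinarith [hα0' k]
    have badδ : ∀ k, ε ≤ (inner ℝ (a - p) (x (k + 1) - p) : ℝ) → d ≤ δ (x (k + 1)) :=
      fun k hkb => hdP (x (k + 1)) (hbound (k + 1)) hkb
    have claimA : ∃ K, N₁ ≤ K ∧ e K ≤ 2 * ε + ρ / 2 := by
      by_contra hA
      push_neg at hA
      set Φ : ℕ → ℝ := fun k => e k - (if d ≤ δ (x k) then ρ / 2 else 0) with hΦdef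
      clear_value Φ
      have hΦlb : ∀ k, -(ρ / 2) ≤ Φ k := by
        intro k
        have : (if d ≤ δ (x k) then ρ / 2 else 0) ≤ ρ / 2 := by
          split <;> linarith
        have h0 := he0 k
        simp only [hΦdef]
        linarith
      have hΦup : ∀ k, Φ k ≤ e k := by
        intro k
        have : (0:ℝ) ≤ (if d ≤ δ (x k) then ρ / 2 else 0) := by
          split <;> linarith
        simp only [hΦdef]
        linarith
      have step : ∀ k, N₁ ≤ k → Φ (k + 1) ≤ Φ k - α k * (ρ / 4) := by
        intro k hk
        have hαk0 := hα0' k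
        have hαk1 := hα1 k
        by_cases h1 : d ≤ δ (x k)
        · have h2 := drop k hk h1
          have hΦk : Φ k = e k - ρ / 2 := by simp only [hΦdef, if_pos h1]
          have := hΦup (k + 1)
          have : α k * (ρ / 4) ≤ ρ / 4 := by nlinarith
          linarith [hΦup (k + 1)]
        · have hΦk : Φ k = e k := by simp only [hΦdef, if_neg h1]; ring
          by_cases h2 : ε ≤ (inner ℝ (a - p) (x (k + 1) - p) : ℝ)
          · have h3 : d ≤ δ (x (k + 1)) := badδ k h2
            have hΦk1 : Φ (k + 1) = e (k + 1) - ρ / 2 := by simp only [hΦdef, if_pos h3]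
            have h4 := rise k hk
            have : α k * (ρ / 4) ≤ ρ / 4 := by nlinarith
            linarith
          · push_neg at h2
            have h4 := good k h2
            have h5 : 2 * ε + ρ / 2 < e k := hA k hk
            have h6 : α k * (ρ / 2) ≤ α k * (e k - 2 * ε) :=
              mul_le_mul_of_nonneg_left (by linarith) hαk0
            have := hΦup (k + 1)
            nlinarith
      have sum : ∀ K, N₁ ≤ K → Φ K + ρ / 4 * (∑ j ∈ Finset.Ico N₁ K, α j) ≤ Φ N₁ := by
        intro K hK
        induction K, hK using Nat.le_induction with
        | base => simp
        | succ K hK ih =>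
          rw [Finset.sum_Ico_succ_top hK, mul_add]
          have := step K hK
          linarith
      have htail : Tendsto (fun K => ∑ j ∈ Finset.Ico N₁ K, α j) atTop atTop := by
        have hcongr : ∀ᶠ K in atTop, (∑ j ∈ Finset.range K, α j)
            + -(∑ j ∈ Finset.range N₁, α j) = ∑ j ∈ Finset.Ico N₁ K, α j := by
          filter_upwards [eventually_ge_atTop N₁] with K hK
          rw [Finset.sum_Ico_eq_sub _ hK]; ring
        exact Tendsto.congr' hcongr (tendsto_atTop_add_const_right atTop _ hαdiv)
      have htail2 : Tendsto (fun K => ρ / 4 * ∑ j ∈ Finset.Ico N₁ K, α j) atTop atTop :=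
        htail.const_mul_atTop (by positivity)
      obtain ⟨K, hK1, hK2⟩ :=
        ((htail2.eventually_ge_atTop (Φ N₁ + ρ / 2 + 1)).and (eventually_ge_atTop N₁)).exists
      have h7 := sum K hK2
      have h8 := hΦlb K
      linarith
    obtain ⟨K, hKN, hKe⟩ := claimA
    set f : ℕ → ℝ := fun k => max (e k) (2 * ε) with hfdef
    have hfmax : ∀ k, f k = max (e k) (2 * ε) := fun k => by rw [hfdef]
    clear_value f
    have hef : ∀ k, e k ≤ f k := fun k => (hfmax k) ▸ le_max_left _ _
    have h2εf : ∀ k, 2 * ε ≤ f k := fun k => (hfmax k) ▸ le_max_right _ _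
    have factG : ∀ k, (inner ℝ (a - p) (x (k + 1) - p) : ℝ) < ε → f (k + 1) ≤ f k := by
      intro k hg
      have h1 := good k hg
      have t1 : (1 - α k) * e k ≤ (1 - α k) * f k :=
        mul_le_mul_of_nonneg_left (hef k) (by linarith [hα1 k])
      have t2 : α k * (2 * ε) ≤ α k * f k := mul_le_mul_of_nonneg_left (h2εf k) (hα0' k)
      have h2 : e (k + 1) ≤ f k := by nlinarith
      rw [hfmax (k + 1)]
      exact max_le h2 (h2εf k)
    have factB1 : ∀ k, N₁ ≤ k → f (k + 1) ≤ f k + ρ / 4 := by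
      intro k hk
      have h1 := rise k hk
      rw [hfmax (k + 1)]
      refine max_le (by linarith [hef k]) ?_
      linarith [h2εf k]
    have factB2 : ∀ k, N₁ ≤ k → ε ≤ (inner ℝ (a - p) (x (k + 1) - p) : ℝ) →
        f (k + 2) ≤ max (f (k + 1) - 3 * (ρ / 4)) (2 * ε) := by
      intro k hk hb
      have h1 : d ≤ δ (x (k + 1)) := badδ k hb
      have h2 := drop (k + 1) (hk.trans (Nat.le_succ k)) h1
      rw [hfmax (k + 2)]
      refine max_le (le_max_of_le_left ?_) (le_max_right _ _)
      linarith [hef (k + 1)]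
    have Q : ∀ j : ℕ, f (K + j) ≤ 2 * ε + ρ / 2 ∨
        (f (K + j) ≤ 2 * ε + 3 * (ρ / 4) ∧ f (K + j + 1) ≤ 2 * ε) := by
      intro j
      induction j with
      | zero =>
        left
        have : f K ≤ 2 * ε + ρ / 2 := by
          rw [hfmax K]
          exact max_le hKe (by linarith)
        simpa using this
      | succ j ih =>
        have hNk : N₁ ≤ K + j := hKN.trans (Nat.le_add_right _ _)
        have hidx : K + (j + 1) = K + j + 1 := rfl
        rcases ih with h | ⟨h1, h2⟩
        · by_cases hb : ε ≤ (inner ℝ (a - p) (x (K + j + 1) - p) : ℝ)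
          · right
            have hB1 := factB1 (K + j) hNk
            constructor
            · rw [hidx]; linarith
            · have hB2 := factB2 (K + j) hNk hb
              have h3 : f (K + j + 1) - 3 * (ρ / 4) ≤ 2 * ε := by linarith
              calc f (K + (j + 1) + 1) = f (K + j + 2) := rfl
                _ ≤ max (f (K + j + 1) - 3 * (ρ / 4)) (2 * ε) := hB2
                _ ≤ 2 * ε := max_le h3 le_rfl
          · push_neg at hb
            left
            have := factG (K + j) hb
            rw [hidx]
            linarith
        · left
          rw [hidx]
          linarith
    refine ⟨K, fun k hk => ?_⟩
    obtain ⟨j, rfl⟩ := Nat.exists_eq_add_of_le hk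
    have hek : e (K + j) ≤ 2 * ε + 3 * (ρ / 4) := by
      rcases Q j with h | ⟨h1, _⟩
      · linarith [hef (K + j)]
      · linarith [hef (K + j)]
    have hεε' : ε * (3 + c0) = ε' := by
      rw [hεdef]; field_simp
    nlinarith
  -- conclude
  rw [Metric.tendsto_atTop]
  intro ε hε
  obtain ⟨N, hN⟩ := main (ε ^ 2) (by positivity)
  refine ⟨N, fun k hk => ?_⟩
  rw [dist_eq_norm]
  have hke : ‖x k - p‖ ^ 2 = e k := by rw [hedef]
  refine lt_of_pow_lt_pow_left₀ 2 hε.le ?_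
  rw [hke]
  exact hN k hk
end

section
/- Under the hypotheses of the distance-rate theorem (Halpern iteration with local decrease constant $c_0 \le 1$, $\gamma$-H\"older error bound with constant $c \ge 1$, stepsizes satisfying the standing assumptions), if additionally $\alpha_k = 1/k$, then the Halpern iterates satisfy $\|x_k - P_S(x)\| = \mathcal{O}(k^{-\gamma/(4-2\gamma)})$, and the number of iterations $N$ needed to achieve $\|x_N - P_S(x)\| \le \varepsilon$ obeys $N = \mathcal{O}(\varepsilon^{-(4/\gamma - 2)})$. -/
open Metric Filter
set_option maxHeartbeats 4000000

theorem stmt13 {n m : ℕ} (hm : 0 < m) (U : Fin m → Set (EuclideanSpace ℝ (Fin n)))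
    (hUcl : ∀ i, IsClosed (U i)) (hUcv : ∀ i, Convex ℝ (U i))
    (hS : (⋂ i, U i).Nonempty)
    (T : EuclideanSpace ℝ (Fin n) → EuclideanSpace ℝ (Fin n))
    (c0 : ℝ) (hc0 : 0 < c0) (hc01 : c0 ≤ 1)
    (hT : ∀ s ∈ ⋂ i, U i, ∀ z,
      ‖T z - s‖ ^ 2 ≤ ‖z - s‖ ^ 2 - c0 * (⨆ i, infDist z (U i)) ^ 2)
    (c γ : ℝ) (hc : 1 ≤ c) (hγ : γ ∈ Set.Ioc (0:ℝ) 1)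
    (α : ℕ → ℝ) (hαdef : ∀ k, α k = 1 / (k + 1 : ℝ))
    (a : EuclideanSpace ℝ (Fin n))
    (x : ℕ → EuclideanSpace ℝ (Fin n)) (hx0 : x 0 = a)
    (hxrec : ∀ k, x (k + 1) = α k • a + (1 - α k) • T (x k))
    (hEB : ∀ k, infDist (x k) (⋂ i, U i) ≤ c * (⨆ i, infDist (x k) (U i)) ^ γ)
    (p : EuclideanSpace ℝ (Fin n)) (hpS : p ∈ ⋂ i, U i)
    (hproj : ∀ y ∈ ⋂ i, U i, ‖a - p‖ ≤ ‖a - y‖) :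
    (∃ C > 0, ∀ᶠ k : ℕ in atTop, ‖x k - p‖ ≤ C * (k : ℝ) ^ (-(γ / (4 - 2 * γ)))) ∧
      (∃ C > 0, ∀ ε : ℝ, 0 < ε →
        ∃ N : ℕ, (N : ℝ) ≤ C * ε ^ (-(4 / γ - 2)) ∧ ‖x N - p‖ ≤ ε) := by
  obtain ⟨hγ0, hγ1⟩ := hγ
  have hScl : IsClosed (⋂ i, U i) := isClosed_iInter hUcl
  have hScv : Convex ℝ (⋂ i, U i) := convex_iInter hUcv
  set r : ℝ := ‖a - p‖ with hrdef
  have hr0 : 0 ≤ r := norm_nonneg _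
  set d : ℕ → ℝ := fun k => ⨆ i, infDist (x k) (U i) with hddef
  have hdk : ∀ k, (⨆ i, infDist (x k) (U i)) = d k := fun k => rfl
  have hd0 : ∀ k, 0 ≤ d k := by
    intro k
    have h1 : infDist (x k) (U ⟨0, hm⟩) ≤ d k :=
      le_ciSup (f := fun i => infDist (x k) (U i)) ((Set.finite_range _).bddAbove) (⟨0, hm⟩ : Fin m)
    exact le_trans infDist_nonneg h1
  have h2γ : (0:ℝ) < 2 - γ := by linarith
  set β : ℝ := γ / (2 - γ) with hβdef
  have hβ0 : 0 < β := div_pos hγ0 h2γ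
  have hβ1 : β ≤ 1 := by rw [hβdef, div_le_one h2γ]; linarith
  set q : ℝ := 2 / (2 - γ) with hqdef
  have hq0 : 0 < q := div_pos (by norm_num) h2γ
  have hqβ : q = β + 1 := by rw [hqdef, hβdef]; field_simp; ring
  have hq2 : q ≤ 2 := by rw [hqdef, div_le_iff₀ h2γ]; linarith
  have hconj : Real.HolderConjugate (2/γ) q := by
    rw [Real.holderConjugate_iff]
    constructor
    · rw [lt_div_iff₀ hγ0]; linarith
    · rw [hqdef]; field_simp; ring
  -- basic stepsize facts
  have hαpos : ∀ k, 0 < α k := by intro k; rw [hαdef]; positivity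
  have hαle1 : ∀ k, α k ≤ 1 := by
    intro k
    rw [hαdef]
    rw [div_le_one (by positivity)]
    have : (0:ℝ) ≤ (k:ℝ) := Nat.cast_nonneg k
    linarith
  -- Young's inequality step constant
  set C₂ : ℝ := (2*r*c*(4/c0)^(γ/2)) ^ q with hC₂def
  have hbase0 : 0 ≤ 2*r*c*(4/c0)^(γ/2) := by
    have h1 : (0:ℝ) ≤ (4/c0)^(γ/2) := Real.rpow_nonneg (by positivity) _
    have h2 : (0:ℝ) ≤ 2*r*c := mul_nonneg (mul_nonneg (by norm_num) hr0) (by linarith)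
    exact mul_nonneg h2 h1
  have hC₂0 : 0 ≤ C₂ := Real.rpow_nonneg hbase0 _
  have hyoung : ∀ k : ℕ, 2 * α k * r * c * d k ^ γ ≤ c0/4 * d k ^ 2 + C₂ * α k ^ q := by
    intro k
    have hA0 : (0:ℝ) ≤ (c0/4)^(γ/2) * d k ^ γ :=
      mul_nonneg (Real.rpow_nonneg (by positivity) _) (Real.rpow_nonneg (hd0 k) _)
    have hB0 : (0:ℝ) ≤ (2*r*c*(4/c0)^(γ/2)) * α k := mul_nonneg hbase0 (hαpos k).le
    have hkey := Real.young_inequality_of_nonneg hA0 hB0 hconj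
    have hAB : ((c0/4)^(γ/2) * d k ^ γ) * ((2*r*c*(4/c0)^(γ/2)) * α k)
        = 2 * α k * r * c * d k ^ γ := by
      have h1 : (c0/4:ℝ)^(γ/2) * (4/c0)^(γ/2) = 1 := by
        rw [← Real.mul_rpow (by positivity) (by positivity),
          show (c0/4) * (4/c0) = 1 by field_simp, Real.one_rpow]
      calc ((c0/4)^(γ/2) * d k ^ γ) * ((2*r*c*(4/c0)^(γ/2)) * α k)
          = ((c0/4:ℝ)^(γ/2) * (4/c0)^(γ/2)) * (2 * α k * r * c * d k ^ γ) := by ring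
        _ = 2 * α k * r * c * d k ^ γ := by rw [h1]; ring
    have hAp : ((c0/4)^(γ/2) * d k ^ γ) ^ (2/γ) = (c0/4) * d k ^ 2 := by
      rw [Real.mul_rpow (Real.rpow_nonneg (by positivity) _) (Real.rpow_nonneg (hd0 k) _),
        ← Real.rpow_mul (by positivity : (0:ℝ) ≤ c0/4),
        ← Real.rpow_mul (hd0 k),
        show (γ/2) * (2/γ) = 1 by field_simp,
        show γ * (2/γ) = 2 by field_simp,
        Real.rpow_one,
        show (2:ℝ) = ((2:ℕ):ℝ) by norm_num, Real.rpow_natCast]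
    have hBq : ((2*r*c*(4/c0)^(γ/2)) * α k) ^ q = C₂ * α k ^ q := by
      rw [Real.mul_rpow hbase0 (hαpos k).le, hC₂def]
    rw [hAB, hAp, hBq] at hkey
    have hp1 : (1:ℝ) ≤ 2/γ := by rw [le_div_iff₀ hγ0]; linarith
    have hdiv1 : (c0/4) * d k ^2 / (2/γ) ≤ (c0/4) * d k ^2 :=
      div_le_self (by positivity) hp1
    have hq1 : (1:ℝ) ≤ q := by rw [hqβ]; linarith
    have hdiv2 : C₂ * α k ^ q / q ≤ C₂ * α k ^ q :=
      div_le_self (mul_nonneg hC₂0 (Real.rpow_nonneg (hαpos k).le _)) hq1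
    linarith
  -- one-step inequality
  have hstep : ∀ k : ℕ, 1 ≤ k →
      ‖x (k+1) - p‖^2 ≤ (1 - α k)^2 * ‖x k - p‖^2 + (r^2 + C₂) * α k ^ q := by
    intro k hk
    obtain ⟨w, hwS, hwd⟩ := hScl.exists_infDist_eq_dist hS (x k)
    have hxw : ‖x k - w‖ = infDist (x k) (⋂ i, U i) := by rw [hwd, dist_eq_norm]
    have hTw2 := hT w hwS (x k)
    have hTp2 := hT p hpS (x k)
    rw [hdk k] at hTw2 hTp2
    have hEBk := hEB k
    rw [hdk k] at hEBk
    have hcd0 : 0 ≤ c * d k ^ γ := mul_nonneg (by linarith) (Real.rpow_nonneg (hd0 k) γ)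
    have hTwle : ‖T (x k) - w‖ ≤ c * d k ^ γ := by
      have h2 : ‖x k - w‖^2 ≤ (c * d k ^γ)^2 :=
        pow_le_pow_left₀ (norm_nonneg _) (hxw ▸ hEBk) 2
      have h3 : (0:ℝ) ≤ c0 * d k^2 := mul_nonneg hc0.le (sq_nonneg _)
      have h4 : ‖T (x k) - w‖^2 ≤ (c * d k ^ γ)^2 := by linarith
      have h5 := Real.sqrt_le_sqrt h4
      rwa [Real.sqrt_sq (norm_nonneg _), Real.sqrt_sq hcd0] at h5
    have hinn1 : (inner ℝ (a - p) (T (x k) - w) : ℝ) ≤ r * (c * d k ^ γ) :=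
      le_trans (real_inner_le_norm _ _) (mul_le_mul_of_nonneg_left hTwle hr0)
    have hproj0 : (inner ℝ (a - p) (w - p) : ℝ) ≤ 0 := by
      haveI : Nonempty ↑(⋂ i, U i) := hS.to_subtype
      have hbdd : BddBelow (Set.range (fun y : ↑(⋂ i, U i) => ‖a - (y:EuclideanSpace ℝ (Fin n))‖)) := by
        refine ⟨0, ?_⟩
        rintro b ⟨y, rfl⟩
        exact norm_nonneg _
      have hmin : ‖a - p‖ = ⨅ y : (⋂ i, U i), ‖a - (y:EuclideanSpace ℝ (Fin n))‖ := by
        apply le_antisymm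
        · exact le_ciInf fun y => hproj y y.2
        · exact ciInf_le hbdd ⟨p, hpS⟩
      exact (norm_eq_iInf_iff_real_inner_le_zero hScv hpS).mp hmin w hwS
    have hinn : (inner ℝ (a - p) (T (x k) - p) : ℝ) ≤ r * (c * d k ^ γ) := by
      have hsplit : T (x k) - p = (T (x k) - w) + (w - p) := by abel
      rw [hsplit, inner_add_right]
      linarith
    have hxdecomp : x (k+1) - p = α k • (a - p) + (1 - α k) • (T (x k) - p) := by
      rw [hxrec k]; module
    have h1α : 0 ≤ 1 - α k := by linarith [hαle1 k]
    have hexp : ‖x (k+1) - p‖^2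
        = (α k)^2 * r^2 + 2 * (α k * (1 - α k)) * (inner ℝ (a - p) (T (x k) - p) : ℝ)
          + (1 - α k)^2 * ‖T (x k) - p‖^2 := by
      rw [hxdecomp, norm_add_sq_real, norm_smul, norm_smul,
        real_inner_smul_left, real_inner_smul_right, Real.norm_eq_abs, Real.norm_eq_abs,
        abs_of_nonneg (hαpos k).le, abs_of_nonneg h1α]
      ring
    have hαhalf : α k ≤ 1/2 := by
      rw [hαdef]
      rw [div_le_div_iff₀ (by positivity) (by norm_num)]
      have : (1:ℝ) ≤ (k:ℝ) := Nat.one_le_cast.mpr hk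
      linarith
    have hquarter : (1/4 : ℝ) ≤ (1 - α k)^2 := by
      have h5 := pow_le_pow_left₀ (by norm_num : (0:ℝ) ≤ 1/2)
        (by linarith : (1/2:ℝ) ≤ 1 - α k) 2
      norm_num at h5
      linarith
    -- cross term bound
    have hcross : 2 * (α k * (1 - α k)) * (inner ℝ (a - p) (T (x k) - p) : ℝ)
        ≤ (1 - α k)^2 * (c0 * d k^2) + C₂ * α k ^ q := by
      have hco : 0 ≤ 2 * (α k * (1 - α k)) := by
        have := mul_nonneg (hαpos k).le h1α
        linarith
      have h1 : 2 * (α k * (1 - α k)) * (inner ℝ (a - p) (T (x k) - p) : ℝ)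
          ≤ 2 * (α k * (1 - α k)) * (r * (c * d k ^ γ)) :=
        mul_le_mul_of_nonneg_left hinn hco
      have h2 : 2 * (α k * (1 - α k)) * (r * (c * d k ^ γ)) ≤ 2 * α k * r * c * d k ^ γ := by
        have hrc : 0 ≤ r * (c * d k ^ γ) := mul_nonneg hr0 hcd0
        have e := mul_le_of_le_one_left hrc (by linarith [hαpos k] : 1 - α k ≤ 1)
        have e2 := mul_le_mul_of_nonneg_left e
          (by linarith [hαpos k] : (0:ℝ) ≤ 2 * α k)
        calc 2 * (α k * (1 - α k)) * (r * (c * d k ^ γ))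
            = 2 * α k * ((1 - α k) * (r * (c * d k ^ γ))) := by ring
          _ ≤ 2 * α k * (r * (c * d k ^ γ)) := e2
          _ = 2 * α k * r * c * d k ^ γ := by ring
      have h3 := hyoung k
      have h4 : c0/4 * d k ^ 2 ≤ (1 - α k)^2 * (c0 * d k^2) := by
        have h5 := mul_le_mul_of_nonneg_right hquarter (mul_nonneg hc0.le (sq_nonneg (d k)))
        linarith
      linarith
    have hαq : (α k)^2 ≤ α k ^ q := by
      have := Real.rpow_le_rpow_of_exponent_ge (hαpos k) (hαle1 k) hq2
      rwa [show ((2:ℝ)) = ((2:ℕ):ℝ) by norm_num, Real.rpow_natCast] at this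
    have hTp2' : (1 - α k)^2 * ‖T (x k) - p‖^2
        ≤ (1 - α k)^2 * ‖x k - p‖^2 - (1 - α k)^2 * (c0 * d k ^2) := by
      have h6 := mul_le_mul_of_nonneg_left hTp2 (sq_nonneg (1 - α k))
      rw [mul_sub] at h6
      linarith
    have hr2 : (α k)^2 * r^2 ≤ r^2 * α k ^ q := by
      have h6 := mul_le_mul_of_nonneg_left hαq (sq_nonneg r)
      linarith
    have hd2 : 0 ≤ (1 - α k)^2 * (c0 * d k ^2) :=
      mul_nonneg (sq_nonneg _) (mul_nonneg hc0.le (sq_nonneg _))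
    rw [hexp]
    linarith
  -- x 1 = a
  have hx1 : x 1 = a := by
    have h0 := hxrec 0
    rw [hαdef 0] at h0
    norm_num at h0
    exact h0
  set C₃ : ℝ := r^2 + C₂ with hC₃def
  have hC₃0 : 0 ≤ C₃ := by positivity
  -- main weighted induction
  have hmain : ∀ k : ℕ, 1 ≤ k →
      (k:ℝ)^2 * ‖x k - p‖^2 ≤ r^2 + C₃ * ((k:ℝ) - 1) * (k:ℝ)^(1 - β) := by
    intro k hk
    induction k with
    | zero => omega
    | succ k ih =>
      rcases Nat.lt_or_ge k 1 with h1 | h1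
      · have hk0 : k = 0 := by omega
        subst hk0
        rw [hx1]
        norm_num
        exact le_rfl
      · have ihk := ih h1
        have hs := hstep k h1
        have hK1 : (1:ℝ) ≤ (k:ℝ) := Nat.one_le_cast.mpr h1
        have hK0 : (0:ℝ) < (k:ℝ) := by linarith
        have hK10 : (0:ℝ) < (k:ℝ) + 1 := by linarith
        -- multiply step by (k+1)^2
        have hcoef : ((k:ℝ)+1)^2 * (1 - α k)^2 = (k:ℝ)^2 := by
          rw [hαdef]
          field_simp
          ring
        have hαq' : ((k:ℝ)+1)^2 * α k ^ q = ((k:ℝ)+1)^(1-β) := by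
          rw [hαdef, one_div, Real.inv_rpow hK10.le, ← Real.rpow_neg hK10.le,
            show ((k:ℝ)+1)^2 = ((k:ℝ)+1)^((2:ℕ):ℝ) from (Real.rpow_natCast _ 2).symm,
            ← Real.rpow_add hK10]
          congr 1
          rw [hqβ]
          push_cast
          ring
        have hmul := mul_le_mul_of_nonneg_left hs (le_of_lt (by positivity : (0:ℝ) < ((k:ℝ)+1)^2))
        rw [mul_add, ← mul_assoc, ← mul_assoc, hcoef] at hmul
        have hmul2 : ((k:ℝ)+1)^2 * ‖x (k+1) - p‖^2
            ≤ (k:ℝ)^2 * ‖x k - p‖^2 + C₃ * ((k:ℝ)+1)^(1-β) := by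
          calc ((k:ℝ)+1)^2 * ‖x (k+1) - p‖^2
              ≤ (k:ℝ)^2 * ‖x k - p‖^2 + ((k:ℝ)+1)^2 * C₃ * α k ^ q := hmul
            _ = (k:ℝ)^2 * ‖x k - p‖^2 + C₃ * (((k:ℝ)+1)^2 * α k ^ q) := by ring
            _ = (k:ℝ)^2 * ‖x k - p‖^2 + C₃ * ((k:ℝ)+1)^(1-β) := by rw [hαq']
        -- monotonicity of the rpow factor
        have hmono : ((k:ℝ))^(1-β) ≤ ((k:ℝ)+1)^(1-β) :=
          Real.rpow_le_rpow hK0.le (by linarith) (by linarith)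
        have hterm : C₃ * ((k:ℝ) - 1) * (k:ℝ)^(1-β) ≤ C₃ * ((k:ℝ) - 1) * ((k:ℝ)+1)^(1-β) :=
          mul_le_mul_of_nonneg_left hmono (mul_nonneg hC₃0 (by linarith))
        have hfin : (k:ℝ)^2 * ‖x k - p‖^2 + C₃ * ((k:ℝ)+1)^(1-β)
            ≤ r^2 + C₃ * (((k:ℝ)+1) - 1) * ((k:ℝ)+1)^(1-β) := by
          have : C₃ * (((k:ℝ)+1) - 1) * ((k:ℝ)+1)^(1-β)
              = C₃ * ((k:ℝ) - 1) * ((k:ℝ)+1)^(1-β) + C₃ * ((k:ℝ)+1)^(1-β) := by ring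
          rw [this]
          linarith
        push_cast
        calc ((k:ℝ)+1)^2 * ‖x (k+1) - p‖^2
            ≤ (k:ℝ)^2 * ‖x k - p‖^2 + C₃ * ((k:ℝ)+1)^(1-β) := hmul2
          _ ≤ r^2 + C₃ * (((k:ℝ)+1) - 1) * ((k:ℝ)+1)^(1-β) := hfin
  -- rate for the norm
  set C₄ : ℝ := r^2 + C₃ with hC₄def
  have hC₄0 : 0 ≤ C₄ := by positivity
  set C₅ : ℝ := Real.sqrt C₄ + r + 1 with hC₅def
  have hsq : Real.sqrt C₄ ^ 2 = C₄ := Real.sq_sqrt hC₄0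
  have hC₅1 : 1 ≤ C₅ := by
    have := Real.sqrt_nonneg C₄
    rw [hC₅def]; linarith
  have hC₅r : r ≤ C₅ := by
    have := Real.sqrt_nonneg C₄
    rw [hC₅def]; linarith
  have hC₅0 : 0 < C₅ := by linarith
  have hC₅sq : C₄ ≤ C₅^2 := by
    have h1 := Real.sqrt_nonneg C₄
    nlinarith
  have hrate : ∀ k : ℕ, 1 ≤ k → ‖x k - p‖ ≤ C₅ * (k:ℝ)^(-(β/2)) := by
    intro k hk
    have hK1 : (1:ℝ) ≤ (k:ℝ) := Nat.one_le_cast.mpr hk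
    have hK0 : (0:ℝ) < (k:ℝ) := by linarith
    have h1 := hmain k hk
    have e1 : (1:ℝ) ≤ (k:ℝ)^(2-β) := by
      calc (1:ℝ) = 1^(2-β) := (Real.one_rpow _).symm
        _ ≤ (k:ℝ)^(2-β) := Real.rpow_le_rpow (by norm_num) hK1 (by linarith)
    have esplit : (k:ℝ)^(2-β) = (k:ℝ) * (k:ℝ)^(1-β) := by
      rw [show (2-β) = 1 + (1-β) by ring, Real.rpow_add hK0, Real.rpow_one]
    have e2 : ((k:ℝ)-1) * (k:ℝ)^(1-β) ≤ (k:ℝ)^(2-β) := by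
      rw [esplit]
      exact mul_le_mul_of_nonneg_right (by linarith) (Real.rpow_nonneg hK0.le _)
    have e3 : (k:ℝ)^2 * ‖x k - p‖^2 ≤ C₄ * (k:ℝ)^(2-β) := by
      have e3a : r^2 ≤ r^2 * (k:ℝ)^(2-β) := le_mul_of_one_le_right (sq_nonneg r) e1
      have e3b : C₃ * (((k:ℝ)-1) * (k:ℝ)^(1-β)) ≤ C₃ * (k:ℝ)^(2-β) :=
        mul_le_mul_of_nonneg_left e2 hC₃0
      calc (k:ℝ)^2 * ‖x k - p‖^2 ≤ r^2 + C₃ * ((k:ℝ) - 1) * (k:ℝ)^(1-β) := h1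
        _ = r^2 + C₃ * (((k:ℝ)-1) * (k:ℝ)^(1-β)) := by ring
        _ ≤ r^2 * (k:ℝ)^(2-β) + C₃ * (k:ℝ)^(2-β) := by linarith
        _ = C₄ * (k:ℝ)^(2-β) := by rw [hC₄def]; ring
    have e4 : (k:ℝ)^(2-β) = (k:ℝ)^2 * (k:ℝ)^(-β) := by
      rw [show (2-β) = ((2:ℕ):ℝ) + (-β) by push_cast; ring, Real.rpow_add hK0, Real.rpow_natCast]
    have e5 : ‖x k - p‖^2 ≤ C₄ * (k:ℝ)^(-β) := by
      rw [e4] at e3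
      have hk2 : (0:ℝ) < (k:ℝ)^2 := by positivity
      have := e3
      rw [show C₄ * ((k:ℝ)^2 * (k:ℝ)^(-β)) = (k:ℝ)^2 * (C₄ * (k:ℝ)^(-β)) by ring] at this
      exact le_of_mul_le_mul_left this hk2
    have e6 : (C₅ * (k:ℝ)^(-(β/2)))^2 = C₅^2 * (k:ℝ)^(-β) := by
      rw [mul_pow, ← Real.rpow_natCast ((k:ℝ)^(-(β/2))) 2, ← Real.rpow_mul hK0.le]
      congr 1
      push_cast
      ring
    have e7 : ‖x k - p‖^2 ≤ (C₅ * (k:ℝ)^(-(β/2)))^2 := by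
      rw [e6]
      calc ‖x k - p‖^2 ≤ C₄ * (k:ℝ)^(-β) := e5
        _ ≤ C₅^2 * (k:ℝ)^(-β) :=
          mul_le_mul_of_nonneg_right hC₅sq (Real.rpow_nonneg hK0.le _)
    have e8 : 0 ≤ C₅ * (k:ℝ)^(-(β/2)) :=
      mul_nonneg hC₅0.le (Real.rpow_nonneg hK0.le _)
    have e9 := Real.sqrt_le_sqrt e7
    rwa [Real.sqrt_sq (norm_nonneg _), Real.sqrt_sq e8] at e9
  -- exponent identities
  have hexp1 : γ / (4 - 2*γ) = β/2 := by
    rw [hβdef, div_div]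
    congr 1
    ring
  have hexp2 : 4/γ - 2 = 2/β := by
    have hγne : γ ≠ 0 := ne_of_gt hγ0
    rw [hβdef, div_div_eq_mul_div, eq_div_iff hγne, sub_mul, div_mul_cancel₀ _ hγne]
    ring
  constructor
  · refine ⟨C₅, hC₅0, ?_⟩
    filter_upwards [eventually_ge_atTop 1] with k hk
    rw [hexp1]
    exact hrate k hk
  · refine ⟨2 * C₅ ^ (2/β), by positivity, ?_⟩
    intro ε hε
    by_cases hεr : r ≤ ε
    · refine ⟨0, ?_, ?_⟩
      · have : (0:ℝ) < 2 * C₅ ^ (2/β) * ε ^ (-(4/γ - 2)) := by positivity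
        simpa using this.le
      · rw [hx0]
        exact hεr
    · push_neg at hεr
      have hεC₅ : ε < C₅ := lt_of_lt_of_le hεr hC₅r
      set t : ℝ := (C₅/ε) ^ (2/β) with htdef
      have hdivpos : (0:ℝ) < C₅/ε := by positivity
      have hdiv1 : (1:ℝ) ≤ C₅/ε := by
        rw [le_div_iff₀ hε]
        linarith
      have ht1 : 1 ≤ t := by
        calc (1:ℝ) = 1^(2/β) := (Real.one_rpow _).symm
          _ ≤ (C₅/ε)^(2/β) := Real.rpow_le_rpow (by norm_num) hdiv1 (by positivity)
      have ht0 : 0 ≤ t := by linarith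
      refine ⟨⌈t⌉₊, ?_, ?_⟩
      · have h1 : (⌈t⌉₊:ℝ) ≤ t + 1 := (Nat.ceil_lt_add_one ht0).le
        have h3 : t = C₅^(2/β) * ε^(-(2/β)) := by
          rw [htdef, Real.div_rpow hC₅0.le hε.le, Real.rpow_neg hε.le, div_eq_mul_inv]
        rw [hexp2]
        calc (⌈t⌉₊:ℝ) ≤ 2*t := by linarith
          _ = 2 * C₅^(2/β) * ε^(-(2/β)) := by rw [h3]; ring
      · have hN1 : 1 ≤ ⌈t⌉₊ := Nat.one_le_ceil_iff.mpr (by linarith)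
        have hb := hrate ⌈t⌉₊ hN1
        have htN : t ≤ (⌈t⌉₊:ℝ) := Nat.le_ceil t
        have hNpos : (0:ℝ) < (⌈t⌉₊:ℝ) := by
          have : (1:ℝ) ≤ (⌈t⌉₊:ℝ) := Nat.one_le_cast.mpr hN1
          linarith
        have ht2 : t^(β/2) = C₅/ε := by
          rw [htdef, ← Real.rpow_mul hdivpos.le,
            show (2/β)*(β/2) = 1 by field_simp, Real.rpow_one]
        have h5 : C₅/ε ≤ ((⌈t⌉₊:ℝ))^(β/2) := by
          rw [← ht2]
          exact Real.rpow_le_rpow ht0 htN (by positivity)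
        have hXpos : (0:ℝ) < ((⌈t⌉₊:ℝ))^(β/2) := lt_of_lt_of_le hdivpos h5
        have h6 : ((⌈t⌉₊:ℝ))^(-(β/2)) = (((⌈t⌉₊:ℝ))^(β/2))⁻¹ := Real.rpow_neg hNpos.le _
        have h7 : C₅ * ((⌈t⌉₊:ℝ))^(-(β/2)) ≤ ε := by
          rw [h6, mul_inv_le_iff₀' hXpos]
          calc C₅ = (C₅/ε) * ε := by field_simp
            _ ≤ ((⌈t⌉₊:ℝ))^(β/2) * ε := mul_le_mul_of_nonneg_right h5 hε.le
        linarith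
end

section
/- Let $U_1,\ldots,U_m \subset \mathbb{R}^n$ be nonempty closed convex sets with $S := \bigcap_i U_i \neq \varnothing$, and define the composition of projections $T_{\mathrm{MAP}} x := P_{U_m} P_{U_{m-1}} \cdots P_{U_1} x$. Then for every $s \in S$ and $x \in \mathbb{R}^n$, $\|T_{\mathrm{MAP}} x - s\|^2 \le \|x - s\|^2 - \tfrac{1}{m}\,\delta(x)^2$, where $\delta(x) = \max_{1\le i\le m} \mathrm{dist}(x, U_i)$. -/
/-!
Along the chain `p₀ = x`, `pₖ₊₁ = P_{U_{k+1}} pₖ`, each projection step loses at least its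
squared length: `‖pₖ₊₁ - s‖² + ‖pₖ - pₖ₊₁‖² ≤ ‖pₖ - s‖²`. Telescoping, the total squared step
length is at most `‖x - s‖² - ‖T x - s‖²`. On the other hand `dist(x, Uᵢ) ≤ ‖x - pᵢ‖` is at most
the total step length, whose square is at most `m` times the total squared step length by
Cauchy–Schwarz.
-/

open Metric RealInnerProductSpace

section

variable {E : Type*} [NormedAddCommGroup E] [InnerProductSpace ℝ E]

theorem Convex.norm_sub_sq_add_norm_sub_sq_le_of_forall_norm_sub_le {U : Set E}
    (hU : Convex ℝ U) {z v s : E} (hv : v ∈ U) (hs : s ∈ U)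
    (hmin : ∀ y ∈ U, ‖z - v‖ ≤ ‖z - y‖) :
    ‖v - s‖ ^ 2 + ‖z - v‖ ^ 2 ≤ ‖z - s‖ ^ 2 := by
  have : Nonempty U := ⟨⟨v, hv⟩⟩
  have hinf : ‖z - v‖ = ⨅ w : U, ‖z - w‖ :=
    le_antisymm (le_ciInf fun w => hmin w w.2)
      (ciInf_le (f := fun w : U => ‖z - w‖)
        ⟨0, by rintro _ ⟨w, rfl⟩; exact norm_nonneg _⟩ ⟨v, hv⟩)
  have hobtuse : ⟪z - v, s - v⟫ ≤ 0 :=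
    (norm_eq_iInf_iff_real_inner_le_zero hU hv).mp hinf s hs
  have hinner : ⟪z - v, v - s⟫ = -⟪z - v, s - v⟫ := by
    rw [← inner_neg_right, neg_sub]
  calc ‖v - s‖ ^ 2 + ‖z - v‖ ^ 2
      ≤ ‖z - v‖ ^ 2 + 2 * ⟪z - v, v - s⟫ + ‖v - s‖ ^ 2 := by linarith
    _ = ‖z - s‖ ^ 2 := by rw [← norm_add_sq_real, sub_add_sub_cancel]

theorem norm_sub_sq_add_sum_norm_sub_sq_le_of_projection_chain {m : ℕ}
    {U : Fin m → Set E} (hU : ∀ i, Convex ℝ (U i)) {p : ℕ → E}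
    (hp_mem : ∀ i : Fin m, p (i + 1) ∈ U i)
    (hp_min : ∀ i : Fin m, ∀ y ∈ U i, ‖p i - p (i + 1)‖ ≤ ‖p i - y‖) {s : E}
    (hs : s ∈ ⋂ i, U i) :
    ‖p m - s‖ ^ 2 + ∑ k ∈ Finset.range m, ‖p k - p (k + 1)‖ ^ 2 ≤ ‖p 0 - s‖ ^ 2 := by
  have hstep : ∀ k ∈ Finset.range m,
      ‖p k - p (k + 1)‖ ^ 2 ≤ ‖p k - s‖ ^ 2 - ‖p (k + 1) - s‖ ^ 2 := by
    intro k hk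
    let i : Fin m := ⟨k, Finset.mem_range.mp hk⟩
    have := (hU i).norm_sub_sq_add_norm_sub_sq_le_of_forall_norm_sub_le (hp_mem i)
      (Set.mem_iInter.mp hs i) (hp_min i)
    linarith
  have := (Finset.sum_le_sum hstep).trans_eq
    (Finset.sum_range_sub' (fun k => ‖p k - s‖ ^ 2) m)
  linarith

end

theorem iSup_infDist_le_sum_dist_of_chain {X : Type*} [PseudoMetricSpace X] {m : ℕ}
    {U : Fin m → Set X} {p : ℕ → X} (hp_mem : ∀ i : Fin m, p (i + 1) ∈ U i) :
    ⨆ i, infDist (p 0) (U i) ≤ ∑ k ∈ Finset.range m, dist (p k) (p (k + 1)) := by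
  refine Real.iSup_le (fun i => ?_) (Finset.sum_nonneg fun _ _ => dist_nonneg)
  calc infDist (p 0) (U i) ≤ dist (p 0) (p (i + 1)) := infDist_le_dist_of_mem (hp_mem i)
    _ ≤ ∑ k ∈ Finset.range (i + 1), dist (p k) (p (k + 1)) := dist_le_range_sum_dist p _
    _ ≤ ∑ k ∈ Finset.range m, dist (p k) (p (k + 1)) :=
      Finset.sum_le_sum_of_subset_of_nonneg (Finset.range_subset_range.mpr i.2)
        fun _ _ _ => dist_nonneg

theorem one_div_mul_sq_le_sum_sq_of_le_sum {m : ℕ} {d : ℕ → ℝ} {δ : ℝ} (hδ : 0 ≤ δ)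
    (hδd : δ ≤ ∑ k ∈ Finset.range m, d k) :
    1 / m * δ ^ 2 ≤ ∑ k ∈ Finset.range m, d k ^ 2 := by
  rcases Nat.eq_zero_or_pos m with rfl | hm
  · simp
  have hm' : (0 : ℝ) < m := by exact_mod_cast hm
  have hcs : (∑ k ∈ Finset.range m, d k) ^ 2 ≤ m * ∑ k ∈ Finset.range m, d k ^ 2 := by
    simpa using sq_sum_le_card_mul_sum_sq (s := Finset.range m) (f := d)
  rw [one_div_mul_eq_div, div_le_iff₀ hm', mul_comm]
  exact (pow_le_pow_left₀ hδ hδd 2).trans hcs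

theorem List.foldl_take_ofFn_add_one {α : Type*} {m : ℕ} (P : Fin m → α → α) (x : α)
    (i : Fin m) :
    ((List.ofFn P).take (i + 1)).foldl (fun y f => f y) x =
      P i (((List.ofFn P).take i).foldl (fun y f => f y) x) := by
  simp [List.take_add_one]

theorem stmt15_general {n m : ℕ} (U : Fin m → Set (EuclideanSpace ℝ (Fin n)))
    (hUcv : ∀ i, Convex ℝ (U i))
    (P : Fin m → EuclideanSpace ℝ (Fin n) → EuclideanSpace ℝ (Fin n))
    (hPmem : ∀ i z, P i z ∈ U i)
    (hPproj : ∀ i z, ∀ y ∈ U i, ‖z - P i z‖ ≤ ‖z - y‖) :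
    ∀ s ∈ ⋂ i, U i, ∀ x : EuclideanSpace ℝ (Fin n),
      ‖(List.ofFn P).foldl (fun y f => f y) x - s‖ ^ 2 ≤
        ‖x - s‖ ^ 2 - (1 / m) * (⨆ i, infDist x (U i)) ^ 2 := by
  intro s hs x
  set p : ℕ → EuclideanSpace ℝ (Fin n) :=
    fun k => ((List.ofFn P).take k).foldl (fun y f => f y) x with hp
  have hp_succ (i : Fin m) : p (i + 1) = P i (p i) := List.foldl_take_ofFn_add_one P x i
  have hp_zero : p 0 = x := rfl
  have hp_last : p m = (List.ofFn P).foldl (fun y f => f y) x := by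
    simp only [hp, List.take_of_length_le (List.length_ofFn).le]
  have hp_mem (i : Fin m) : p (i + 1) ∈ U i := hp_succ i ▸ hPmem i (p i)
  have hp_min (i : Fin m) : ∀ y ∈ U i, ‖p i - p (i + 1)‖ ≤ ‖p i - y‖ :=
    hp_succ i ▸ hPproj i (p i)
  have hdecrease :=
    norm_sub_sq_add_sum_norm_sub_sq_le_of_projection_chain hUcv hp_mem hp_min hs
  have hδ := iSup_infDist_le_sum_dist_of_chain hp_mem
  simp only [dist_eq_norm] at hδ
  have := one_div_mul_sq_le_sum_sq_of_le_sum
    (Real.iSup_nonneg fun i => infDist_nonneg) hδ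
  rw [← hp_last, ← hp_zero]
  linarith

theorem stmt15 {n m : ℕ} (hm : 0 < m) (U : Fin m → Set (EuclideanSpace ℝ (Fin n)))
    (hUne : ∀ i, (U i).Nonempty) (hUcl : ∀ i, IsClosed (U i)) (hUcv : ∀ i, Convex ℝ (U i))
    (hS : (⋂ i, U i).Nonempty)
    (P : Fin m → EuclideanSpace ℝ (Fin n) → EuclideanSpace ℝ (Fin n))
    (hPmem : ∀ i z, P i z ∈ U i)
    (hPproj : ∀ i z, ∀ y ∈ U i, ‖z - P i z‖ ≤ ‖z - y‖) :
    ∀ s ∈ ⋂ i, U i, ∀ x : EuclideanSpace ℝ (Fin n),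
      ‖(List.ofFn P).foldl (fun y f => f y) x - s‖ ^ 2 ≤
        ‖x - s‖ ^ 2 - (1 / m) * (⨆ i, infDist x (U i)) ^ 2 :=
  stmt15_general U hUcv P hPmem hPproj
end

section
/- Let $U_1,\ldots,U_m \subset \mathbb{R}^n$ be nonempty closed convex sets with $S := \bigcap_i U_i \neq \varnothing$, and define Cimmino's operator $T_{\mathrm{Cim}} x := \frac{1}{m}\sum_{k=1}^m P_{U_k} x$. Then for every $s \in S$ and $x \in \mathbb{R}^n$, $\|T_{\mathrm{Cim}} x - s\|^2 \le \|x-s\|^2 - \tfrac{1}{m}\,\delta(x)^2$, where $\delta(x) = \max_{1\le k\le m} \mathrm{dist}(x, U_k)$. -/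
open Metric
open scoped InnerProductSpace

theorem stmt16 {n m : ℕ} (hm : 0 < m) (U : Fin m → Set (EuclideanSpace ℝ (Fin n)))
    (hUne : ∀ i, (U i).Nonempty) (hUcl : ∀ i, IsClosed (U i)) (hUcv : ∀ i, Convex ℝ (U i))
    (hS : (⋂ i, U i).Nonempty)
    (P : Fin m → EuclideanSpace ℝ (Fin n) → EuclideanSpace ℝ (Fin n))
    (hPmem : ∀ i z, P i z ∈ U i)
    (hPproj : ∀ i z, ∀ y ∈ U i, ‖z - P i z‖ ≤ ‖z - y‖) :
    ∀ s ∈ ⋂ i, U i, ∀ x : EuclideanSpace ℝ (Fin n),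
      ‖(m : ℝ)⁻¹ • (∑ i, P i x) - s‖ ^ 2 ≤
        ‖x - s‖ ^ 2 - (1 / m) * (⨆ i, infDist x (U i)) ^ 2 := by
  intro s hs x
  have hsU : ∀ i, s ∈ U i := fun i => Set.mem_iInter.mp hs i
  haveI : NeZero m := ⟨hm.ne'⟩
  -- Pythagorean inequality for each projection
  have key : ∀ i, ‖P i x - s‖ ^ 2 + ‖x - P i x‖ ^ 2 ≤ ‖x - s‖ ^ 2 := by
    intro i
    haveI : Nonempty (U i) := (hUne i).to_subtype
    have heq : ‖x - P i x‖ = ⨅ w : U i, ‖x - w‖ := by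
      refine le_antisymm (le_ciInf fun w => hPproj i x w w.2) ?_
      exact ciInf_le ⟨0, fun _ ⟨_, h⟩ => h ▸ norm_nonneg _⟩
        (⟨P i x, hPmem i x⟩ : U i)
    have hinner : ⟪x - P i x, s - P i x⟫_ℝ ≤ 0 :=
      (norm_eq_iInf_iff_real_inner_le_zero (hUcv i) (hPmem i x)).mp heq s (hsU i)
    have hexp : ‖x - s‖ ^ 2 =
        ‖x - P i x‖ ^ 2 - 2 * ⟪x - P i x, s - P i x⟫_ℝ + ‖s - P i x‖ ^ 2 := by
      have := @norm_sub_sq_real (EuclideanSpace ℝ (Fin n)) _ _ (x - P i x) (s - P i x)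
      simpa using this
    have hrev2 : ‖s - P i x‖ ^ 2 = ‖P i x - s‖ ^ 2 := by rw [norm_sub_rev]
    nlinarith
  set v : Fin m → EuclideanSpace ℝ (Fin n) := fun i => P i x - s with hv
  have hms : ((m : ℝ)⁻¹ • (∑ i, P i x) - s) = (m : ℝ)⁻¹ • ∑ i, v i := by
    rw [hv, Finset.sum_sub_distrib, smul_sub, Finset.sum_const, Finset.card_univ,
      Fintype.card_fin]
    congr 1
    rw [← Nat.cast_smul_eq_nsmul ℝ, smul_smul,
      inv_mul_cancel₀ (by exact_mod_cast hm.ne' : (m : ℝ) ≠ 0), one_smul]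
  have hm' : (0 : ℝ) < m := by exact_mod_cast hm
  -- convexity of squared norm
  have step1 : ‖(m : ℝ)⁻¹ • ∑ i, v i‖ ^ 2 ≤ (1 / m) * ∑ i, ‖v i‖ ^ 2 := by
    have h1 : ‖∑ i, v i‖ ≤ ∑ i, ‖v i‖ := norm_sum_le _ _
    have h2 : (∑ i, ‖v i‖) ^ 2 ≤ m * ∑ i, ‖v i‖ ^ 2 := by
      have := sq_sum_le_card_mul_sum_sq (s := Finset.univ) (f := fun i => ‖v i‖)
      simpa using this
    have h3 : ‖(m : ℝ)⁻¹ • ∑ i, v i‖ ^ 2 = (m : ℝ)⁻¹ ^ 2 * ‖∑ i, v i‖ ^ 2 := by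
      rw [norm_smul]
      simp [mul_pow, abs_of_pos (inv_pos.mpr hm')]
    have h4 : ‖∑ i, v i‖ ^ 2 ≤ (∑ i, ‖v i‖) ^ 2 := by
      apply sq_le_sq' <;> nlinarith [norm_nonneg (∑ i, v i), Finset.sum_nonneg (fun i (_ : i ∈ Finset.univ) => norm_nonneg (v i))]
    rw [h3]
    rw [one_div]
    calc (m : ℝ)⁻¹ ^ 2 * ‖∑ i, v i‖ ^ 2 ≤ (m : ℝ)⁻¹ ^ 2 * ((m : ℝ) * ∑ i, ‖v i‖ ^ 2) := by
          apply mul_le_mul_of_nonneg_left (h4.trans h2) (by positivity)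
      _ = (m : ℝ)⁻¹ * ∑ i, ‖v i‖ ^ 2 := by field_simp
  -- sup of infDist bounded
  have step2 : (⨆ i, infDist x (U i)) ^ 2 ≤ ∑ i, ‖x - P i x‖ ^ 2 := by
    obtain ⟨i₀, hi₀⟩ := exists_eq_ciSup_of_finite (f := fun i => infDist x (U i))
    have h1 : infDist x (U i₀) ≤ ‖x - P i₀ x‖ := by
      have := infDist_le_dist_of_mem (x := x) (hPmem i₀ x)
      rwa [dist_eq_norm] at this
    have h2 : (⨆ i, infDist x (U i)) ^ 2 ≤ ‖x - P i₀ x‖ ^ 2 := by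
      rw [← hi₀]
      have h0 : 0 ≤ infDist x (U i₀) := infDist_nonneg
      nlinarith
    refine h2.trans ?_
    exact Finset.single_le_sum (f := fun i => ‖x - P i x‖ ^ 2) (fun i _ => by positivity) (Finset.mem_univ i₀)
  rw [hms]
  refine step1.trans ?_
  have step3 : ∑ i, ‖v i‖ ^ 2 ≤ ∑ i, (‖x - s‖ ^ 2 - ‖x - P i x‖ ^ 2) :=
    Finset.sum_le_sum fun i _ => by have := key i; rw [hv]; nlinarith
  have step4 : ∑ i, (‖x - s‖ ^ 2 - ‖x - P i x‖ ^ 2)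
      = m * ‖x - s‖ ^ 2 - ∑ i, ‖x - P i x‖ ^ 2 := by
    rw [Finset.sum_sub_distrib, Finset.sum_const, Finset.card_univ, Fintype.card_fin,
      nsmul_eq_mul]
  have := step3.trans_eq step4
  rw [one_div]
  calc (m : ℝ)⁻¹ * ∑ i, ‖v i‖ ^ 2
      ≤ (m : ℝ)⁻¹ * (m * ‖x - s‖ ^ 2 - ∑ i, ‖x - P i x‖ ^ 2) := by
        apply mul_le_mul_of_nonneg_left this (by positivity)
    _ ≤ (m : ℝ)⁻¹ * (m * ‖x - s‖ ^ 2 - (⨆ i, infDist x (U i)) ^ 2) := by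
        apply mul_le_mul_of_nonneg_left _ (by positivity)
        linarith [step2]
    _ = ‖x - s‖ ^ 2 - (m : ℝ)⁻¹ * (⨆ i, infDist x (U i)) ^ 2 := by
        field_simp
end

section
/- Let $U_1,\ldots,U_m \subset \mathbb{R}^n$ be nonempty closed convex sets with $S := \bigcap_i U_i \neq \varnothing$. For $x \in \mathbb{R}^n$, define the supporting halfspaces $H_i(x) := \{y : \langle x - P_{U_i}x,\; y - P_{U_i}x\rangle \le 0\}$, the outer approximation $\Omega(x) := \bigcap_{i=1}^m H_i(x)$, and $T_{\mathrm{3PM}} x := P_{\Omega(x)} x$. Then $S \subseteq \Omega(x)$, $\|x - T_{\mathrm{3PM}} x\| \ge \delta(x) := \max_i \mathrm{dist}(x, U_i)$, and for every $s \in S$, $\|T_{\mathrm{3PM}} x - s\|^2 \le \|x - s\|^2 - \delta(x)^2$. -/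
open Metric

lemma proj_char17 {E : Type*} [NormedAddCommGroup E] [InnerProductSpace ℝ E]
    {K : Set E} (hK : Convex ℝ K) {x p : E} (hp : p ∈ K)
    (hmin : ∀ y ∈ K, ‖x - p‖ ≤ ‖x - y‖) :
    ∀ w ∈ K, inner ℝ (x - p) (w - p) ≤ (0:ℝ) := by
  have : Nonempty ↥K := ⟨⟨p, hp⟩⟩
  have heq : ‖x - p‖ = ⨅ w : K, ‖x - w‖ := by
    refine le_antisymm (le_ciInf fun w => hmin w w.2) ?_
    have hb : BddBelow (Set.range fun w : K => ‖x - (w : E)‖) := by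
      refine ⟨0, ?_⟩
      rintro z ⟨w, rfl⟩
      exact norm_nonneg _
    exact ciInf_le hb (⟨p, hp⟩ : K)
  exact (norm_eq_iInf_iff_real_inner_le_zero hK hp).mp heq

theorem stmt17 {n m : ℕ} (hm : 0 < m) (U : Fin m → Set (EuclideanSpace ℝ (Fin n)))
    (hUne : ∀ i, (U i).Nonempty) (hUcl : ∀ i, IsClosed (U i)) (hUcv : ∀ i, Convex ℝ (U i))
    (hS : (⋂ i, U i).Nonempty)
    (x : EuclideanSpace ℝ (Fin n))
    (P : Fin m → EuclideanSpace ℝ (Fin n))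
    (hPmem : ∀ i, P i ∈ U i)
    (hPproj : ∀ i, ∀ y ∈ U i, ‖x - P i‖ ≤ ‖x - y‖)
    (q : EuclideanSpace ℝ (Fin n))
    (hqΩ : q ∈ ⋂ i, {y | inner ℝ (x - P i) (y - P i) ≤ (0:ℝ)})
    (hqproj : ∀ y ∈ ⋂ i, {y | inner ℝ (x - P i) (y - P i) ≤ (0:ℝ)}, ‖x - q‖ ≤ ‖x - y‖) :
    (⋂ i, U i) ⊆ (⋂ i, {y | inner ℝ (x - P i) (y - P i) ≤ (0:ℝ)}) ∧
      ‖x - q‖ ≥ (⨆ i, infDist x (U i)) ∧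
      ∀ s ∈ ⋂ i, U i, ‖q - s‖ ^ 2 ≤ ‖x - s‖ ^ 2 - (⨆ i, infDist x (U i)) ^ 2 := by
  have hne : Nonempty (Fin m) := ⟨⟨0, hm⟩⟩
  -- Part 1
  have h1 : (⋂ i, U i) ⊆ (⋂ i, {y | inner ℝ (x - P i) (y - P i) ≤ (0:ℝ)}) := by
    intro s hs
    simp only [Set.mem_iInter] at hs ⊢
    intro i
    exact proj_char17 (hUcv i) (hPmem i) (hPproj i) s (hs i)
  -- key: ‖x - P i‖ ≤ ‖x - q‖
  have hkey : ∀ i, ‖x - P i‖ ≤ ‖x - q‖ := by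
    intro i
    have hq : inner ℝ (x - P i) (q - P i) ≤ (0:ℝ) := by
      have := Set.mem_iInter.mp hqΩ i; exact this
    have hexp : ‖x - q‖ ^ 2 = ‖x - P i‖ ^ 2 - 2 * inner ℝ (x - P i) (q - P i) + ‖q - P i‖ ^ 2 := by
      have : x - q = (x - P i) - (q - P i) := by abel
      rw [this, @norm_sub_sq_real]
    nlinarith [norm_nonneg (q - P i), norm_nonneg (x - q), norm_nonneg (x - P i),
      sq_nonneg (‖x - q‖ - ‖x - P i‖)]
  have hdelta : ∀ i, infDist x (U i) ≤ ‖x - q‖ := fun i =>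
    le_trans (by rw [← dist_eq_norm]; exact infDist_le_dist_of_mem (hPmem i)) (hkey i)
  have h2 : (⨆ i, infDist x (U i)) ≤ ‖x - q‖ := ciSup_le hdelta
  have hd0 : (0:ℝ) ≤ ⨆ i, infDist x (U i) :=
    Real.iSup_nonneg fun i => infDist_nonneg
  refine ⟨h1, h2, ?_⟩
  -- Part 3
  intro s hs
  have hΩconv : Convex ℝ (⋂ i, {y : EuclideanSpace ℝ (Fin n) | inner ℝ (x - P i) (y - P i) ≤ (0:ℝ)}) := by
    apply convex_iInter
    intro i
    have heq : {y : EuclideanSpace ℝ (Fin n) | inner ℝ (x - P i) (y - P i) ≤ (0:ℝ)}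
        = {y | inner ℝ (x - P i) y ≤ (inner ℝ (x - P i) (P i) : ℝ)} := by
      ext y
      simp only [Set.mem_setOf_eq, inner_sub_right, sub_nonpos]
    rw [heq]
    exact convex_halfSpace_le
      ⟨fun a b => inner_add_right _ _ _, fun c a => real_inner_smul_right _ _ _⟩ _
  have hchar : inner ℝ (x - q) (s - q) ≤ (0:ℝ) :=
    proj_char17 hΩconv hqΩ hqproj s (h1 hs)
  have hexp : ‖x - s‖ ^ 2 = ‖x - q‖ ^ 2 - 2 * inner ℝ (x - q) (s - q) + ‖s - q‖ ^ 2 := by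
    have : x - s = (x - q) - (s - q) := by abel
    rw [this, @norm_sub_sq_real]
  have hsq : (⨆ i, infDist x (U i)) ^ 2 ≤ ‖x - q‖ ^ 2 := by
    apply pow_le_pow_left₀ hd0 h2
  rw [norm_sub_rev]
  linarith
end
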